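/- arXiv:2212.09461 — 4 statements merged into one kernel-verified Lean document; each statement's English description precedes it below -/
import Mathlib

section
/- Let L > 0 and let g(x) = e^{(L-x)/2} - e^{x/2} for x ∈ [0, L/2] and g(x) = 0 for x > L/2. Then ∫_0^∞ g(x)/cosh(x/2) dx = e^{L/2}·L - 2(e^{L/2}+1)·log(e^{L/2}+1) + 2(e^{L/2}+1)·log 2. -/
open MeasureTheory Real Set

theorem stmt_3 (L : ℝ) (hL : 0 < L) (g : ℝ → ℝ)
    (hg : ∀ x ∈ Set.Icc 0 (L/2), g x = Real.exp ((L - x)/2) - Real.exp (x/2))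
    (hg' : ∀ x : ℝ, L/2 < x → g x = 0) :
    ∫ x in Set.Ioi (0:ℝ), g x / Real.cosh (x/2)
      = Real.exp (L/2) * L - 2 * (Real.exp (L/2) + 1) * Real.log (Real.exp (L/2) + 1)
        + 2 * (Real.exp (L/2) + 1) * Real.log 2 := by
  set a := Real.exp (L/2) with ha
  have ha0 : (0:ℝ) < a := Real.exp_pos _
  have hb : (0:ℝ) ≤ L/2 := by linarith
  set f : ℝ → ℝ := fun x => 2*(a - Real.exp x)/(Real.exp x + 1) with hf
  have hfc : Continuous f := by
    apply Continuous.div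
    · continuity
    · continuity
    · intro x; positivity
  -- the integrand agrees with f on Ioc 0 (L/2)
  have h1 : ∀ x ∈ Set.Ioc (0:ℝ) (L/2), g x / Real.cosh (x/2) = f x := by
    intro x hx
    rw [hg x ⟨le_of_lt hx.1, hx.2⟩, Real.cosh_eq]
    have e1 : Real.exp ((L - x)/2) = a * Real.exp (-(x/2)) := by
      rw [ha, ← Real.exp_add]; ring_nf
    have e2 : Real.exp x = Real.exp (x/2) * Real.exp (x/2) := by
      rw [← Real.exp_add]; ring_nf
    have e3 : Real.exp (-(x/2)) * Real.exp (x/2) = 1 := by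
      rw [← Real.exp_add]; simp
    have h4 : Real.exp (x/2) + Real.exp (-(x/2)) > 0 := by positivity
    have h5 : Real.exp x + 1 > 0 := by positivity
    rw [e1, hf]
    beta_reduce
    rw [e2]
    field_simp
    linear_combination (a*Real.exp (x/2) + Real.exp (x/2)) * e3
  have hmI : MeasurableSet (Set.Ioc (0:ℝ) (L/2)) := measurableSet_Ioc
  have hint1 : IntegrableOn (fun x => g x / Real.cosh (x/2)) (Set.Ioc 0 (L/2)) := by
    rw [MeasureTheory.integrableOn_congr_fun h1 hmI]
    exact hfc.integrableOn_Ioc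
  have hzero : ∀ x ∈ Set.Ioi (L/2), g x / Real.cosh (x/2) = 0 := by
    intro x hx; rw [hg' x hx]; simp
  have hint2 : IntegrableOn (fun x => g x / Real.cosh (x/2)) (Set.Ioi (L/2)) := by
    rw [MeasureTheory.integrableOn_congr_fun hzero measurableSet_Ioi]
    simp
  have hsplit : (∫ x in Set.Ioi (0:ℝ), g x / Real.cosh (x/2))
      = ∫ x in Set.Ioc (0:ℝ) (L/2), g x / Real.cosh (x/2) := by
    rw [← Set.Ioc_union_Ioi_eq_Ioi hb,
      MeasureTheory.setIntegral_union (Set.Ioc_disjoint_Ioi le_rfl) measurableSet_Ioi hint1 hint2,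
      MeasureTheory.setIntegral_eq_zero_of_forall_eq_zero hzero, add_zero]
  rw [hsplit, MeasureTheory.setIntegral_congr_fun hmI h1,
    ← intervalIntegral.integral_of_le hb]
  -- FTC
  set F : ℝ → ℝ := fun x => 2*a*x - 2*(a+1)*Real.log (Real.exp x + 1) with hF
  have hderiv : ∀ x ∈ Set.uIcc (0:ℝ) (L/2), HasDerivAt F (f x) x := by
    intro x _
    have h5 : Real.exp x + 1 ≠ 0 := by positivity
    have h2 : HasDerivAt (fun x => Real.log (Real.exp x + 1))
        (Real.exp x/(Real.exp x + 1)) x := ((Real.hasDerivAt_exp x).add_const 1).log h5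
    have h3 := ((hasDerivAt_id x).const_mul (2*a)).sub (h2.const_mul (2*(a+1)))
    refine h3.congr_deriv ?_
    rw [hf]; field_simp; ring
  have := intervalIntegral.integral_eq_sub_of_hasDerivAt hderiv
    (hfc.intervalIntegrable _ _)
  rw [this, hF]
  simp only [Real.exp_zero, ha]
  have : Real.log (1 + 1) = Real.log 2 := by norm_num
  rw [this]
  ring
end

section
/- Let L > 0 and let g(x) = e^{(L-x)/2} - e^{x/2} for x ∈ [0, L/2] and g(x) = 0 for x > L/2, so g(0) = e^{L/2} - 1. Then ∫_0^∞ (g(x) - g(0))/sinh(x/2) dx = -e^{L/2}·L + 2(e^{L/2}-1)·log(e^{L/2}-1) - 4(e^{L/2}-1)·log 2. -/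
open Real MeasureTheory Set Filter Topology

private lemma exp_half_deriv (x : ℝ) :
    HasDerivAt (fun y : ℝ => Real.exp (y/2)) (Real.exp (x/2) / 2) x := by
  have h : HasDerivAt (fun y : ℝ => y/2) (1/2) x := (hasDerivAt_id x).div_const 2
  exact ((Real.hasDerivAt_exp (x/2)).comp x h).congr_deriv (g' := Real.exp (x/2) / 2) (by ring)

private lemma auxF (a : ℝ) (x : ℝ) :
    HasDerivAt (fun y : ℝ => -2*a*y + 4*(a-1)*Real.log (Real.exp (y/2) + 1))
      (-2*(Real.exp (x/2)+a)/(Real.exp (x/2)+1)) x := by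
  have hu : (0:ℝ) < Real.exp (x/2) + 1 := by positivity
  have h1 : HasDerivAt (fun y : ℝ => Real.exp (y/2) + 1) (Real.exp (x/2)/2) x :=
    (exp_half_deriv x).add_const 1
  have h2 : HasDerivAt (fun y : ℝ => Real.log (Real.exp (y/2) + 1))
      ((Real.exp (x/2)/2) / (Real.exp (x/2) + 1)) x := h1.log (ne_of_gt hu)
  have h3 := ((hasDerivAt_id x).const_mul (-2*a)).add (h2.const_mul (4*(a-1)))
  refine h3.congr_deriv ?_
  field_simp
  ring

private lemma auxH (a : ℝ) (x : ℝ) (hx : 0 < x) :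
    HasDerivAt (fun y : ℝ => -2*(a-1)*(Real.log (Real.exp (y/2) - 1)
        - Real.log (Real.exp (y/2) + 1)))
      (-(a-1)/Real.sinh (x/2)) x := by
  have hu1 : 1 < Real.exp (x/2) := Real.one_lt_exp_iff.mpr (by linarith)
  have hu0 : (0:ℝ) < Real.exp (x/2) := by positivity
  have h1 : HasDerivAt (fun y : ℝ => Real.log (Real.exp (y/2) - 1))
      ((Real.exp (x/2)/2) / (Real.exp (x/2) - 1)) x :=
    ((exp_half_deriv x).sub_const 1).log (by linarith)
  have h2 : HasDerivAt (fun y : ℝ => Real.log (Real.exp (y/2) + 1))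
      ((Real.exp (x/2)/2) / (Real.exp (x/2) + 1)) x :=
    ((exp_half_deriv x).add_const 1).log (by positivity)
  have h3 := (h1.sub h2).const_mul (-2*(a-1))
  refine h3.congr_deriv ?_
  have hsinh : Real.sinh (x/2) = (Real.exp (x/2)^2 - 1)/(2*Real.exp (x/2)) := by
    rw [Real.sinh_eq, Real.exp_neg]
    field_simp
  have hne : Real.exp (x/2) - 1 ≠ 0 := by linarith
  have hne2 : Real.exp (x/2) + 1 ≠ 0 := by positivity
  have hne3 : Real.exp (x/2)^2 - 1 ≠ 0 := by nlinarith
  rw [hsinh]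
  field_simp
  ring

theorem stmt_4 (L : ℝ) (hL : 0 < L) (g : ℝ → ℝ)
    (hg : ∀ x ∈ Set.Icc 0 (L/2), g x = Real.exp ((L - x)/2) - Real.exp (x/2))
    (hg' : ∀ x : ℝ, L/2 < x → g x = 0) :
    ∫ x in Set.Ioi (0:ℝ), (g x - g 0) / Real.sinh (x/2)
      = -(Real.exp (L/2)) * L + 2 * (Real.exp (L/2) - 1) * Real.log (Real.exp (L/2) - 1)
        - 4 * (Real.exp (L/2) - 1) * Real.log 2 := by
  set a := Real.exp (L/2) with ha_def
  have ha : 1 < a := Real.one_lt_exp_iff.mpr (by linarith)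
  have hg0 : g 0 = a - 1 := by
    rw [hg 0 ⟨le_refl 0, by linarith⟩]; simp [ha_def]
  -- the continuous version on the left piece
  set h : ℝ → ℝ := fun x => -2*(Real.exp (x/2)+a)/(Real.exp (x/2)+1) with hh_def
  have hcont : Continuous h := by
    apply Continuous.div
    · fun_prop
    · fun_prop
    · intro x; positivity
  -- equality of integrands on the left piece
  have heq1 : ∀ x ∈ Ioc (0:ℝ) (L/2), (g x - g 0) / Real.sinh (x/2) = h x := by
    intro x hx
    have hx0 : 0 < x := hx.1
    have hu1 : 1 < Real.exp (x/2) := Real.one_lt_exp_iff.mpr (by linarith)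
    have hu0 : (0:ℝ) < Real.exp (x/2) := by positivity
    rw [hg x ⟨le_of_lt hx0, hx.2⟩, hg0]
    have hLx : Real.exp ((L-x)/2) = a / Real.exp (x/2) := by
      rw [ha_def, ← Real.exp_sub]; ring_nf
    have hsinh : Real.sinh (x/2) = (Real.exp (x/2)^2 - 1)/(2*Real.exp (x/2)) := by
      rw [Real.sinh_eq, Real.exp_neg]
      field_simp
    rw [hLx, hsinh, hh_def]
    have hne2 : Real.exp (x/2) + 1 ≠ 0 := by positivity
    have hne3 : Real.exp (x/2)^2 - 1 ≠ 0 := by nlinarith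
    field_simp
    ring
  have heq2 : ∀ x ∈ Ioi (L/2), (g x - g 0) / Real.sinh (x/2) = -(a-1)/Real.sinh (x/2) := by
    intro x hx
    rw [hg' x hx, hg0]; ring_nf
  -- improper integral on the right piece
  have hH : ∀ x ∈ Ioi (L/2), HasDerivAt (fun y : ℝ => -2*(a-1)*(Real.log (Real.exp (y/2) - 1)
      - Real.log (Real.exp (y/2) + 1))) (-(a-1)/Real.sinh (x/2)) x :=
    fun x hx => auxH a x (by have := hx.out; linarith)
  have hHcont : ContinuousWithinAt (fun y : ℝ => -2*(a-1)*(Real.log (Real.exp (y/2) - 1)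
      - Real.log (Real.exp (y/2) + 1))) (Ici (L/2)) (L/2) :=
    (auxH a (L/2) (by linarith)).continuousAt.continuousWithinAt
  have hHnonpos : ∀ x ∈ Ioi (L/2), -(a-1)/Real.sinh (x/2) ≤ 0 := by
    intro x hx
    have : 0 < Real.sinh (x/2) := Real.sinh_pos_iff.mpr (by have := hx.out; linarith)
    apply div_nonpos_of_nonpos_of_nonneg <;> linarith
  have hHtend : Tendsto (fun y : ℝ => -2*(a-1)*(Real.log (Real.exp (y/2) - 1)
      - Real.log (Real.exp (y/2) + 1))) atTop (𝓝 0) := by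
    have h1 : Tendsto (fun u : ℝ => (u - 1)/(u + 1)) atTop (𝓝 1) := by
      have h2 : Tendsto (fun u : ℝ => 1 - 2/(u+1)) atTop (𝓝 (1 - 0)) := by
        apply tendsto_const_nhds.sub
        exact Tendsto.div_atTop tendsto_const_nhds (tendsto_atTop_add_const_right _ 1 tendsto_id)
      have : (fun u : ℝ => 1 - 2/(u+1)) =ᶠ[atTop] fun u => (u-1)/(u+1) := by
        filter_upwards [eventually_gt_atTop 0] with u hu
        field_simp
        ring
      simpa using h2.congr' this
    have h3 : Tendsto (fun y : ℝ => Real.exp (y/2)) atTop atTop :=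
      Real.tendsto_exp_atTop.comp (tendsto_id.atTop_div_const (by norm_num))
    have h4 : Tendsto (fun y : ℝ => Real.log ((Real.exp (y/2) - 1)/(Real.exp (y/2) + 1)))
        atTop (𝓝 0) := by
      have := (Real.continuousAt_log one_ne_zero).tendsto
      rw [Real.log_one] at this
      exact this.comp (h1.comp h3)
    have h5 : (fun y : ℝ => Real.log ((Real.exp (y/2) - 1)/(Real.exp (y/2) + 1)))
        =ᶠ[atTop] fun y => Real.log (Real.exp (y/2) - 1) - Real.log (Real.exp (y/2) + 1) := by
      filter_upwards [eventually_gt_atTop 0] with y hy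
      have hu1 : 1 < Real.exp (y/2) := Real.one_lt_exp_iff.mpr (by linarith)
      rw [Real.log_div (by linarith) (by positivity)]
    have h6 := h4.congr' h5
    have := h6.const_mul (-2*(a-1))
    simpa using this
  have hint2 : ∫ x in Ioi (L/2), -(a-1)/Real.sinh (x/2)
      = 0 - (-2*(a-1)*(Real.log (Real.exp (L/2/2) - 1) - Real.log (Real.exp (L/2/2) + 1))) :=
    integral_Ioi_of_hasDerivAt_of_nonpos hHcont hH hHnonpos hHtend
  have hintble2 : IntegrableOn (fun x => -(a-1)/Real.sinh (x/2)) (Ioi (L/2)) :=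
    integrableOn_Ioi_deriv_of_nonpos hHcont hH hHnonpos hHtend
  -- integrability of the original integrand
  have hintble2' : IntegrableOn (fun x => (g x - g 0)/Real.sinh (x/2)) (Ioi (L/2)) := by
    apply hintble2.congr_fun (fun x hx => (heq2 x hx).symm) measurableSet_Ioi
  have hintble1 : IntegrableOn (fun x => (g x - g 0)/Real.sinh (x/2)) (Ioc 0 (L/2)) := by
    apply ((hcont.integrableOn_Ioc).congr_fun (fun x hx => (heq1 x hx).symm) measurableSet_Ioc)
  -- split
  have hsplit : Ioi (0:ℝ) = Ioc 0 (L/2) ∪ Ioi (L/2) :=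
    (Set.Ioc_union_Ioi_eq_Ioi (by linarith)).symm
  rw [hsplit, setIntegral_union (Set.Ioc_disjoint_Ioi le_rfl) measurableSet_Ioi hintble1 hintble2']
  -- left piece via FTC
  have hleft : ∫ x in Ioc (0:ℝ) (L/2), (g x - g 0)/Real.sinh (x/2)
      = (-2*a*(L/2) + 4*(a-1)*Real.log (Real.exp (L/2/2) + 1)) - (0 + 4*(a-1)*Real.log 2) := by
    rw [setIntegral_congr_fun measurableSet_Ioc heq1,
      ← intervalIntegral.integral_of_le (by linarith : (0:ℝ) ≤ L/2)]
    have := intervalIntegral.integral_eq_sub_of_hasDerivAt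
      (f := fun y : ℝ => -2*a*y + 4*(a-1)*Real.log (Real.exp (y/2) + 1)) (f' := h)
      (a := 0) (b := L/2) (fun x _ => auxF a x) (hcont.intervalIntegrable 0 (L/2))
    rw [this]
    norm_num [Real.exp_zero]
  rw [hleft, setIntegral_congr_fun measurableSet_Ioi heq2, hint2]
  -- final arithmetic
  have hb : Real.exp (L/2/2) = Real.exp (L/4) := by ring_nf
  have hb1 : 1 < Real.exp (L/4) := Real.one_lt_exp_iff.mpr (by linarith)
  have hbb : Real.exp (L/4) * Real.exp (L/4) = a := by
    rw [ha_def, ← Real.exp_add]; ring_nf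
  have hlog : Real.log (Real.exp (L/4) - 1) + Real.log (Real.exp (L/4) + 1)
      = Real.log (a - 1) := by
    rw [← Real.log_mul (by linarith) (by positivity)]
    congr 1; nlinarith
  rw [hb]
  linear_combination (2*(a-1)) * hlog
end

section
/- For every integer n ≥ 1, with c = 1 + 1/(4n), one has f(c,n)² < 4 - 1/(2n), where f(c,n) = 2√c / (c - 2n(c - 1 - log c)). -/
set_option maxHeartbeats 1000000 in
theorem stmt_8 (n : ℕ) (hn : 1 ≤ n) :
    (2 * Real.sqrt (1 + 1/(4*(n:ℝ))) /
      ((1 + 1/(4*(n:ℝ))) - 2*(n:ℝ)*((1 + 1/(4*(n:ℝ))) - 1 - Real.log (1 + 1/(4*(n:ℝ))))))^2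
      < 4 - 1/(2*(n:ℝ)) := by
  have hn1 : (1:ℝ) ≤ (n:ℝ) := by exact_mod_cast hn
  have hnpos : (0:ℝ) < (n:ℝ) := by linarith
  set t : ℝ := 1/(4*(n:ℝ)) with htdef
  have ht : 0 < t := by positivity
  have ht4 : t ≤ 1/4 := by
    rw [htdef, div_le_div_iff₀ (by positivity) (by norm_num)]
    linarith
  have hnt : 4*(n:ℝ)*t = 1 := by
    rw [htdef]; field_simp
  -- Taylor series lower bound for log(1+t)
  have habs := Real.abs_log_sub_add_sum_range_le (x := -t)
    (by rw [abs_neg, abs_of_pos ht]; linarith) 5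
  have hsum : (∑ i ∈ Finset.range 5, (-t) ^ (i + 1) / (i + 1))
      = -t + t^2/2 - t^3/3 + t^4/4 - t^5/5 := by
    simp [Finset.sum_range_succ]
    ring
  rw [hsum] at habs
  have h1mt : 1 - -t = 1 + t := by ring
  rw [h1mt] at habs
  have habsle : |(-t)| ^ (5+1) / (1 - |(-t)|) ≤ (4/3) * t^6 := by
    rw [abs_neg, abs_of_pos ht]
    rw [div_le_iff₀ (by linarith)]
    nlinarith [pow_pos ht 6, pow_nonneg ht.le 7]
  have hlog : Real.log (1+t) ≥ t - t^2/2 + t^3/3 - t^4/4 + t^5/5 - (4/3)*t^6 := by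
    have := abs_le.1 habs
    linarith [this.1, habsle]
  -- power bounds
  have hb : ∀ k : ℕ, t^k ≤ (1/4:ℝ)^k := fun k => pow_le_pow_left₀ ht.le ht4 k
  have ht2 : (0:ℝ) < t^2 := pow_pos ht 2
  have h3 : t^3 ≤ (1/4)*t^2 := by nlinarith [sq_nonneg t]
  have h5 : t^5 ≤ (1/64)*t^2 := by nlinarith [hb 3, sq_nonneg t, pow_pos ht 3]
  have h6 : t^6 ≤ (1/256)*t^2 := by nlinarith [hb 4, sq_nonneg t, pow_pos ht 4]
  have h9 : t^9 ≤ (1/16384)*t^2 := by nlinarith [hb 7, sq_nonneg t, pow_pos ht 7]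
  have h11 : t^11 ≤ (1/262144)*t^2 := by nlinarith [hb 9, sq_nonneg t, pow_pos ht 9]
  have h4p : (0:ℝ) ≤ t^4 := by positivity
  have h7p : (0:ℝ) ≤ t^7 := by positivity
  have h8p : (0:ℝ) ≤ t^8 := by positivity
  have h10p : (0:ℝ) ≤ t^10 := by positivity
  have h5p : (0:ℝ) ≤ t^5 := by positivity
  have h3p : (0:ℝ) ≤ t^3 := by positivity
  -- denominator lower bound
  set L := Real.log (1+t) with hL
  set D := (1 + t) - 2*(n:ℝ)*((1+t) - 1 - L) with hD
  have h2n : 2*(n:ℝ)*(2*t) = 1 := by linear_combination hnt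
  set Q : ℝ := 1 + 3*t/4 + t^2/6 - t^3/8 + t^4/10 - (2/3)*t^5 with hQ
  clear_value t L D Q
  have hDlb : D ≥ Q := by
    have hE : t - L ≤ t^2/2 - t^3/3 + t^4/4 - t^5/5 + (4/3)*t^6 := by linarith
    have h2npos : (0:ℝ) < 2*(n:ℝ) := by linarith
    have key : 2*(n:ℝ)*(t - L) ≤ 2*(n:ℝ)*(t^2/2 - t^3/3 + t^4/4 - t^5/5 + (4/3)*t^6) :=
      mul_le_mul_of_nonneg_left hE h2npos.le
    have hrhs : 2*(n:ℝ)*(t^2/2 - t^3/3 + t^4/4 - t^5/5 + (4/3)*t^6)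
        = (2*(n:ℝ)*(2*t)) * (t/4 - t^2/6 + t^3/8 - t^4/10 + (2/3)*t^5) := by ring
    rw [hrhs, h2n, one_mul] at key
    have heq : (1+t) - 1 - L = t - L := by ring
    rw [hD, heq, hQ]
    linarith
  have hQpos : 0 < Q := by rw [hQ]; linarith
  have hDpos : 0 < D := lt_of_lt_of_le hQpos hDlb
  have hc : (0:ℝ) < 1 + t := by linarith
  have hsq : Real.sqrt (1+t) ^ 2 = 1 + t := Real.sq_sqrt hc.le
  -- key polynomial inequality : (4 - 2t) * Q^2 > 4 * (1+t)
  have hexp : (4 - 2*t)*Q^2 - 4*(1+t)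
      = (7/12)*t^2 - (43/24)*t^3 + (29/180)*t^4 - (1793/360)*t^5 - (65/48)*t^6
        + (263/288)*t^7 + (1081/900)*t^8 - (133/150)*t^9 + (92/45)*t^10 - (8/9)*t^11 := by
    rw [hQ]; ring
  have hpoly : 4 * (1+t) < (4 - 2*t) * Q^2 := by linarith
  have hQ2D2 : Q^2 ≤ D^2 := pow_le_pow_left₀ hQpos.le hDlb 2
  have h42t : (0:ℝ) < 4 - 2*t := by linarith
  have hmain : 4 * (1+t) < (4 - 2*t) * D^2 :=
    lt_of_lt_of_le hpoly (mul_le_mul_of_nonneg_left hQ2D2 h42t.le)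
  -- finish
  have h12n : 1/(2*(n:ℝ)) = 2*t := by
    rw [htdef]; field_simp; ring
  rw [h12n]
  have hfsq : (2 * Real.sqrt (1+t) / D)^2 = 4*(1+t) / D^2 := by
    rw [div_pow, mul_pow, hsq]; norm_num
  rw [hfsq, div_lt_iff₀ (by positivity)]
  linarith [hmain]
end

section
/- For every integer n ≥ 1 and c = 1 + 1/(4n), the denominator c - 2n(c - 1 - log c) is positive; in fact for n ≥ 9 one has (1/√c)·(c - 2n(c-1-log c)) - 2/√(4 - 1/(2n)) > (4/10³)/n² · √c. -/
set_option maxHeartbeats 1000000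

lemma log_quintic_lb {t : ℝ} (ht : 0 < t) (ht' : t ≤ 1/36) :
    t - t^2/2 + t^3/3 - t^4/4 + t^5/5 - (36/35)*t^6 ≤ Real.log (1+t) := by
  have habs : |(-t)| < 1 := by rw [abs_neg, abs_of_pos ht]; linarith
  have h := Real.abs_log_sub_add_sum_range_le habs 5
  rw [abs_neg, abs_of_pos ht, sub_neg_eq_add] at h
  simp only [Finset.sum_range_succ, Finset.sum_range_zero] at h
  norm_num at h
  have h2 := (abs_le.1 h).1
  have hd : t^6/(1-t) ≤ (36/35)*t^6 := by
    rw [div_le_iff₀ (by linarith)]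
    nlinarith [pow_nonneg ht.le 6]
  nlinarith [h2, hd]

lemma main2 {t : ℝ} (ht : 0 < t) (ht' : t ≤ 1/36) :
    1/Real.sqrt (1+t) * ((1+t) - (1/(2*t))*((1+t) - 1 - Real.log (1+t)))
      - 2/Real.sqrt (4 - 2*t)
    > 4/10^3*(16*t^2) * Real.sqrt (1+t) := by
  set L : ℝ := 1 + 3/4*t + t^2/6 - t^3/8 + t^4/10 - 18/35*t^5 with hL
  set ε : ℝ := 4/10^3*(16*t^2) with hε
  set M : ℝ := L - ε*(1+t) with hM
  have hεpos : 0 < ε := by positivity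
  have hMpos : 0 < M := by rw [hM, hL, hε]; nlinarith [pow_nonneg ht.le 3, pow_nonneg ht.le 4, pow_nonneg ht.le 5]
  -- A ≥ L
  have hlog := log_quintic_lb ht ht'
  have hA : L ≤ (1+t) - (1/(2*t))*((1+t) - 1 - Real.log (1+t)) := by
    have hstep : (1/(2*t))*((1+t) - 1 - Real.log (1+t)) ≤
        (1/(2*t))*(t - (t - t^2/2 + t^3/3 - t^4/4 + t^5/5 - (36/35)*t^6)) := by
      apply mul_le_mul_of_nonneg_left (by linarith) (by positivity)
    have heq : (1/(2*t))*(t - (t - t^2/2 + t^3/3 - t^4/4 + t^5/5 - (36/35)*t^6))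
        = t/4 - t^2/6 + t^3/8 - t^4/10 + 18/35*t^5 := by
      field_simp
      ring
    rw [heq] at hstep
    rw [hL]; linarith
  -- key polynomial inequality
  have hQ : 4*(1+t) < M^2*(4-2*t) := by
    have hu : (0:ℝ) ≤ 1 - 36*t := by linarith
    have hid : M^2*(4-2*t) - 4*(1+t) =
      (297918585375952248/765625)*t^11*(1-36*t)^0 + (220347689204819556/765625)*t^10*(1-36*t)^1 + (11624017656063887/218750)*t^9*(1-36*t)^2 + (300954882448807/62500)*t^8*(1-36*t)^3 + (2706455602784699/10500000)*t^7*(1-36*t)^4 + (9183902220893/1050000)*t^6*(1-36*t)^5 + (1506946306709/7875000)*t^5*(1-36*t)^6 + (1478229841/562500)*t^4*(1-36*t)^7 + (62041/3000)*t^3*(1-36*t)^8 + (107/1500)*t^2*(1-36*t)^9 := by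
      rw [hM, hL, hε]; ring
    have h0 : (0:ℝ) < (297918585375952248/765625)*t^11*(1-36*t)^0 := by norm_num; positivity
    have h1 : (0:ℝ) ≤ (220347689204819556/765625)*t^10*(1-36*t)^1 := by
      apply mul_nonneg (mul_nonneg (by norm_num) (pow_nonneg ht.le 10)) (pow_nonneg hu 1)
    have h2 : (0:ℝ) ≤ (11624017656063887/218750)*t^9*(1-36*t)^2 := by
      apply mul_nonneg (mul_nonneg (by norm_num) (pow_nonneg ht.le 9)) (pow_nonneg hu 2)
    have h3 : (0:ℝ) ≤ (300954882448807/62500)*t^8*(1-36*t)^3 := by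
      apply mul_nonneg (mul_nonneg (by norm_num) (pow_nonneg ht.le 8)) (pow_nonneg hu 3)
    have h4 : (0:ℝ) ≤ (2706455602784699/10500000)*t^7*(1-36*t)^4 := by
      apply mul_nonneg (mul_nonneg (by norm_num) (pow_nonneg ht.le 7)) (pow_nonneg hu 4)
    have h5 : (0:ℝ) ≤ (9183902220893/1050000)*t^6*(1-36*t)^5 := by
      apply mul_nonneg (mul_nonneg (by norm_num) (pow_nonneg ht.le 6)) (pow_nonneg hu 5)
    have h6 : (0:ℝ) ≤ (1506946306709/7875000)*t^5*(1-36*t)^6 := by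
      apply mul_nonneg (mul_nonneg (by norm_num) (pow_nonneg ht.le 5)) (pow_nonneg hu 6)
    have h7 : (0:ℝ) ≤ (1478229841/562500)*t^4*(1-36*t)^7 := by
      apply mul_nonneg (mul_nonneg (by norm_num) (pow_nonneg ht.le 4)) (pow_nonneg hu 7)
    have h8 : (0:ℝ) ≤ (62041/3000)*t^3*(1-36*t)^8 := by
      apply mul_nonneg (mul_nonneg (by norm_num) (pow_nonneg ht.le 3)) (pow_nonneg hu 8)
    have h9 : (0:ℝ) ≤ (107/1500)*t^2*(1-36*t)^9 := by
      apply mul_nonneg (mul_nonneg (by norm_num) (pow_nonneg ht.le 2)) (pow_nonneg hu 9)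
    have hpos : 0 < M^2*(4-2*t) - 4*(1+t) := by
      rw [hid]; linarith [h0, h1, h2, h3, h4, h5, h6, h7, h8, h9]
    linarith [hpos]
  -- sqrt manipulations
  have h1t : (0:ℝ) < 1 + t := by linarith
  have h42 : (0:ℝ) < 4 - 2*t := by linarith
  have hs : 0 < Real.sqrt (1+t) := Real.sqrt_pos.2 h1t
  have hs2 : 0 < Real.sqrt (4-2*t) := Real.sqrt_pos.2 h42
  have hssq : Real.sqrt (1+t)^2 = 1+t := Real.sq_sqrt h1t.le
  have h2sq : Real.sqrt (4-2*t)^2 = 4-2*t := Real.sq_sqrt h42.le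
  have h1 : 2*Real.sqrt (1+t) < M*Real.sqrt (4-2*t) := by
    nlinarith [hQ, hs, hs2, hssq, h2sq, mul_pos hs hs2, sq_nonneg (2*Real.sqrt (1+t) - M*Real.sqrt (4-2*t)), mul_pos hMpos hs2]
  have hdiv : 0 < M/Real.sqrt (1+t) - 2/Real.sqrt (4-2*t) := by
    rw [div_sub_div _ _ hs.ne' hs2.ne']
    apply div_pos (by nlinarith) (by positivity)
  have hkey : 1/Real.sqrt (1+t)*(M + ε*(1+t)) = M/Real.sqrt (1+t) + ε*Real.sqrt (1+t) := by
    field_simp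
    nlinarith [hssq]
  have hmono : 1/Real.sqrt (1+t) * (M + ε*(1+t)) ≤
      1/Real.sqrt (1+t) * ((1+t) - (1/(2*t))*((1+t) - 1 - Real.log (1+t))) := by
    apply mul_le_mul_of_nonneg_left _ (by positivity)
    rw [hM]; linarith
  linarith [hmono, hkey.symm.le, hdiv]

theorem stmt_9 :
    (∀ n : ℕ, 1 ≤ n →
      0 < (1 + 1/(4*(n:ℝ))) - 2*(n:ℝ)*((1 + 1/(4*(n:ℝ))) - 1 - Real.log (1 + 1/(4*(n:ℝ))))) ∧
    (∀ n : ℕ, 9 ≤ n →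
      (1 / Real.sqrt (1 + 1/(4*(n:ℝ)))) *
          ((1 + 1/(4*(n:ℝ))) - 2*(n:ℝ)*((1 + 1/(4*(n:ℝ))) - 1 - Real.log (1 + 1/(4*(n:ℝ)))))
        - 2 / Real.sqrt (4 - 1/(2*(n:ℝ)))
      > (4/10^3)/(n:ℝ)^2 * Real.sqrt (1 + 1/(4*(n:ℝ)))) := by
  constructor
  · intro n hn
    have hx : (1:ℝ) ≤ n := by exact_mod_cast hn
    have hx0 : (0:ℝ) < n := by linarith
    set u : ℝ := 1/(4*(n:ℝ)) with hu
    have hu0 : 0 < u := by positivity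
    have hu4 : u ≤ 1/4 := by
      rw [hu]; rw [div_le_div_iff₀ (by positivity) (by norm_num)]; linarith
    have hnu : (n:ℝ)*u = 1/4 := by rw [hu]; field_simp
    have hc : (0:ℝ) < 1 + u := by linarith
    have hlog := Real.one_sub_inv_le_log_of_pos hc
    have hinv : (1+u)⁻¹ = 1 - u/(1+u) := by field_simp; ring
    rw [hinv] at hlog
    -- so u - log(1+u) ≤ u - u/(1+u) = u^2/(1+u) ≤ u^2
    have hfrac : u^2/(1+u) ≤ u^2 := by
      rw [div_le_iff₀ hc]; nlinarith [sq_nonneg u]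
    have hfrac2 : u - u/(1+u) = u^2/(1+u) := by field_simp; ring
    have hle : (1+u) - 1 - Real.log (1+u) ≤ u^2 := by
      have : u - Real.log (1+u) ≤ u^2/(1+u) := by linarith [hlog, hfrac2.le, hfrac2.ge]
      linarith [hfrac]
    have hmul : 2*(n:ℝ)*((1+u) - 1 - Real.log (1+u)) ≤ 2*(n:ℝ)*u^2 := by
      apply mul_le_mul_of_nonneg_left hle (by positivity)
    have h2nu : 2*(n:ℝ)*u^2 = u/2 := by
      nlinarith [hnu]
    nlinarith [hmul, h2nu, hu0]
  · intro n hn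
    have hx : (9:ℝ) ≤ n := by exact_mod_cast hn
    have hx0 : (0:ℝ) < n := by linarith
    set t : ℝ := 1/(4*(n:ℝ)) with htdef
    have ht : 0 < t := by positivity
    have ht36 : t ≤ 1/36 := by
      rw [htdef, div_le_div_iff₀ (by positivity) (by norm_num)]; linarith
    have e1 : 2*(n:ℝ) = 1/(2*t) := by rw [htdef]; field_simp; ring
    have e2 : (4:ℝ) - 1/(2*(n:ℝ)) = 4 - 2*t := by rw [htdef]; field_simp; ring
    have e3 : (4/10^3:ℝ)/(n:ℝ)^2 = 4/10^3*(16*t^2) := by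
      rw [htdef]; field_simp; ring
    rw [e2, e3, e1]
    have := main2 ht ht36
    linarith [this]
end
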